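/- Let L be outer (i.e. there is some σ with (L,σ) satisfying (F1)), with associated characteristic class χ(L) = [χ_{(L,σ)}] ∈ H³(𝒢,Z(𝒩))_L. Then there exists a groupoid extension of 𝒢 by 𝒩 whose 𝒢-kernel is [L] (i.e. there exists a full factor system (L,σ'') satisfying both (F1) and (F2)) if and only if χ(L) is trivial. -/

import Mathlib

/-- A groupoid over a unit space `U`, with a total (junk-valued outside composables)
multiplication. `e : U → G` is the inclusion of units. -/
structure Gpd (G U : Type) where
  s : G → U
  r : G → U
  e : U → G
  mul : G → G → G
  inv : G → G
  s_e : ∀ u, s (e u) = u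
  r_e : ∀ u, r (e u) = u
  e_mul : ∀ x, mul (e (r x)) x = x
  mul_e : ∀ x, mul x (e (s x)) = x
  s_inv : ∀ x, s (inv x) = r x
  r_inv : ∀ x, r (inv x) = s x
  inv_mul : ∀ x, mul (inv x) x = e (s x)
  mul_inv : ∀ x, mul x (inv x) = e (r x)
  r_mul : ∀ x y, s x = r y → r (mul x y) = r x
  s_mul : ∀ x y, s x = r y → s (mul x y) = s y
  assoc : ∀ x y z, s x = r y → s y = r z → mul (mul x y) z = mul x (mul y z)

/-- A group bundle over `U`: a total space `N` with projection `p`, each fiber being a group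
(operations are total, with group laws holding fiberwise). -/
structure GrpBundle (N U : Type) where
  p : N → U
  one : U → N
  mul : N → N → N
  inv : N → N
  p_one : ∀ u, p (one u) = u
  p_mul : ∀ n m, p n = p m → p (mul n m) = p n
  p_inv : ∀ n, p (inv n) = p n
  one_mul : ∀ n, mul (one (p n)) n = n
  mul_one : ∀ n, mul n (one (p n)) = n
  inv_mul : ∀ n, mul (inv n) n = one (p n)
  mul_inv : ∀ n, mul n (inv n) = one (p n)
  assoc : ∀ a b c, p a = p b → p b = p c → mul (mul a b) c = mul a (mul b c)

/-- A pair `(L, σ)` satisfying all the conditions of a factor system for `(𝒢, 𝒩)` except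
possibly the twisted cocycle condition (F2): `L` is a family of fiberwise group isomorphisms
`L x : N_{s x} → N_{r x}`, trivial on units, and `σ : 𝒢⁽²⁾ → 𝒩` is normalized with
`σ (x, y) ∈ N_{r x}`, satisfying the twisted action condition (F1). -/
structure PreFS {G U N : Type} (𝒢 : Gpd G U) (𝒩 : GrpBundle N U) where
  L : G → N → N
  σ : G → G → N
  L_fib : ∀ x n, 𝒩.p n = 𝒢.s x → 𝒩.p (L x n) = 𝒢.r x
  L_mul : ∀ x n m, 𝒩.p n = 𝒢.s x → 𝒩.p m = 𝒢.s x →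
    L x (𝒩.mul n m) = 𝒩.mul (L x n) (L x m)
  L_bij : ∀ x, Set.BijOn (L x) {n | 𝒩.p n = 𝒢.s x} {n | 𝒩.p n = 𝒢.r x}
  L_e : ∀ u n, 𝒩.p n = u → L (𝒢.e u) n = n
  σ_fib : ∀ x y, 𝒢.s x = 𝒢.r y → 𝒩.p (σ x y) = 𝒢.r x
  σ_e_left : ∀ x, σ (𝒢.e (𝒢.r x)) x = 𝒩.one (𝒢.r x)
  σ_e_right : ∀ x, σ x (𝒢.e (𝒢.s x)) = 𝒩.one (𝒢.r x)
  F1 : ∀ x y n, 𝒢.s x = 𝒢.r y → 𝒩.p n = 𝒢.s y →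
    L x (L y n) = 𝒩.mul (𝒩.mul (σ x y) (L (𝒢.mul x y) n)) (𝒩.inv (σ x y))

/-- A factor system `(L, σ)` for `(𝒢, 𝒩)`: conditions (F1) and (F2). -/
structure FS {G U N : Type} (𝒢 : Gpd G U) (𝒩 : GrpBundle N U) extends PreFS 𝒢 𝒩 where
  F2 : ∀ x y z, 𝒢.s x = 𝒢.r y → 𝒢.s y = 𝒢.r z →
    𝒩.mul (σ x y) (σ (𝒢.mul x y) z) = 𝒩.mul (L x (σ y z)) (σ x (𝒢.mul y z))

/-- `χ_{(L,σ)}(x,y,z) = L_x(σ(y,z)) σ(x,yz) σ(xy,z)⁻¹ σ(x,y)⁻¹`. -/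
def chi {G U N : Type} (𝒢 : Gpd G U) (𝒩 : GrpBundle N U)
    (L : G → N → N) (σ : G → G → N) (x y z : G) : N :=
  𝒩.mul (𝒩.mul (𝒩.mul (L x (σ y z)) (σ x (𝒢.mul y z)))
    (𝒩.inv (σ (𝒢.mul x y) z))) (𝒩.inv (σ x y))

/-!
Write `σ = ρ · τ` fiberwise, where `τ` is another cochain with the same `L`. Conjugation by
`σ(x,y)` and by `τ(x,y)` agree on the image of `L_{xy}`, which is the whole fiber over `r x`, so
`(L, τ)` satisfies (F1) iff `ρ` takes central values. Central factors can then be pulled out of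
`χ`, giving `χ_{(L,σ)} = χ_{(L,ρ)} · χ_{(L,τ)}`, where `χ_{(L,ρ)}` is the coboundary `d_L ρ`; and
(F2) for `τ` says exactly that `χ_{(L,τ)}` is trivial. An extension `(L, σ'')` yields
`ρ = σ σ''⁻¹`; conversely a central `ρ` with `χ_{(L,σ)} = d_L ρ` yields `σ'' = ρ⁻¹ σ`.
-/

section GroupLemmas

variable {Γ : Type*} [Group Γ]

theorem conj_mul_eq_conj_iff_mem_center (a b : Γ) :
    (∀ m, a * b * m * (a * b)⁻¹ = b * m * b⁻¹) ↔ a ∈ Subgroup.center Γ := by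
  rw [Subgroup.mem_center_iff]
  refine ⟨fun h g => ?_, fun h m => ?_⟩
  · have hg : a * g * a⁻¹ = g := by simpa only [mul_assoc, mul_inv_rev, mul_inv_cancel_left,
      mul_inv_cancel, mul_one] using h (b⁻¹ * g * b)
    exact (mul_inv_eq_iff_eq_mul.mp hg).symm
  · calc a * b * m * (a * b)⁻¹ = a * (b * m * b⁻¹) * a⁻¹ := by group
      _ = b * m * b⁻¹ := by rw [← h]; group

theorem mul_mul_inv_mul_inv_eq_iff_of_mem_center {r₁ r₂ r₃ r₄ : Γ}
    (h₂ : r₂ ∈ Subgroup.center Γ) (h₃ : r₃ ∈ Subgroup.center Γ) (h₄ : r₄ ∈ Subgroup.center Γ)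
    (a b c d : Γ) :
    r₁ * a * (r₂ * b) * (r₃ * c)⁻¹ * (r₄ * d)⁻¹ = r₁ * r₂ * r₃⁻¹ * r₄⁻¹ ↔ d * c = a * b := by
  have e₂ := Subgroup.mem_center_iff.mp h₂
  have e₃ := Subgroup.mem_center_iff.mp (inv_mem h₃)
  have e₄ := Subgroup.mem_center_iff.mp (inv_mem h₄)
  have hsplit : r₁ * a * (r₂ * b) * (r₃ * c)⁻¹ * (r₄ * d)⁻¹ =
      r₁ * r₂ * r₃⁻¹ * r₄⁻¹ * (a * b * c⁻¹ * d⁻¹) :=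
    calc r₁ * a * (r₂ * b) * (r₃ * c)⁻¹ * (r₄ * d)⁻¹
        = r₁ * (a * r₂) * b * c⁻¹ * r₃⁻¹ * (d⁻¹ * r₄⁻¹) := by group
      _ = r₁ * r₂ * (a * b * c⁻¹ * r₃⁻¹) * (d⁻¹ * r₄⁻¹) := by rw [e₂ a]; group
      _ = r₁ * r₂ * r₃⁻¹ * (a * b * c⁻¹ * d⁻¹ * r₄⁻¹) := by rw [e₃ (a * b * c⁻¹)]; group
      _ = r₁ * r₂ * r₃⁻¹ * r₄⁻¹ * (a * b * c⁻¹ * d⁻¹) := by rw [e₄]; group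
  rw [hsplit, mul_eq_left, mul_inv_eq_one, mul_inv_eq_iff_eq_mul, eq_comm]

end GroupLemmas

namespace GrpBundle

variable {N U : Type} (𝒩 : GrpBundle N U)

abbrev Fiber (u : U) : Type := {n : N // 𝒩.p n = u}

instance (u : U) : Group (𝒩.Fiber u) where
  mul a b := ⟨𝒩.mul a.1 b.1, by rw [𝒩.p_mul _ _ (a.2.trans b.2.symm), a.2]⟩
  one := ⟨𝒩.one u, 𝒩.p_one u⟩
  inv a := ⟨𝒩.inv a.1, (𝒩.p_inv a.1).trans a.2⟩
  mul_assoc a b c := Subtype.ext (𝒩.assoc a.1 b.1 c.1 (a.2.trans b.2.symm) (b.2.trans c.2.symm))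
  one_mul := fun ⟨a, ha⟩ => Subtype.ext (ha ▸ 𝒩.one_mul a)
  mul_one := fun ⟨a, ha⟩ => Subtype.ext (ha ▸ 𝒩.mul_one a)
  inv_mul_cancel := fun ⟨a, ha⟩ => Subtype.ext (ha ▸ 𝒩.inv_mul a)

variable {𝒩}

theorem p_mul_of_eq {u : U} {a b : N} (ha : 𝒩.p a = u) (hb : 𝒩.p b = u) :
    𝒩.p (𝒩.mul a b) = u :=
  (𝒩.p_mul a b (ha.trans hb.symm)).trans ha

theorem inv_mul_cancel_right {a b : N} (h : 𝒩.p b = 𝒩.p a) :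
    𝒩.mul (𝒩.mul a (𝒩.inv b)) b = a :=
  congrArg Subtype.val (_root_.inv_mul_cancel_right (⟨a, rfl⟩ : 𝒩.Fiber (𝒩.p a)) ⟨b, h⟩)

theorem mul_inv_cancel_left {a b : N} (h : 𝒩.p b = 𝒩.p a) :
    𝒩.mul a (𝒩.mul (𝒩.inv a) b) = b :=
  congrArg Subtype.val (_root_.mul_inv_cancel_left (⟨a, rfl⟩ : 𝒩.Fiber (𝒩.p a)) ⟨b, h⟩)

theorem mk_mem_center_iff {u : U} {a : N} (ha : 𝒩.p a = u) :
    (⟨a, ha⟩ : 𝒩.Fiber u) ∈ Subgroup.center (𝒩.Fiber u) ↔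
      ∀ m, 𝒩.p m = u → 𝒩.mul a m = 𝒩.mul m a := by
  rw [Subgroup.mem_center_iff, Subtype.forall]
  exact forall₂_congr fun m hm => Subtype.ext_iff.trans eq_comm

theorem conj_mul_eq_conj_iff {u : U} {a b : N} (ha : 𝒩.p a = u) (hb : 𝒩.p b = u) :
    (∀ m, 𝒩.p m = u →
      𝒩.mul (𝒩.mul (𝒩.mul a b) m) (𝒩.inv (𝒩.mul a b)) = 𝒩.mul (𝒩.mul b m) (𝒩.inv b)) ↔
    ∀ m, 𝒩.p m = u → 𝒩.mul a m = 𝒩.mul m a := by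
  rw [← mk_mem_center_iff ha, ← conj_mul_eq_conj_iff_mem_center _ (⟨b, hb⟩ : 𝒩.Fiber u),
    Subtype.forall]
  exact forall₂_congr fun m hm => ⟨fun h => Subtype.ext h, congrArg Subtype.val⟩

end GrpBundle

section Cochains

variable {G U N : Type} (𝒢 : Gpd G U) (𝒩 : GrpBundle N U)

def IsTwoCochain (τ : G → G → N) : Prop :=
  ∀ x y, 𝒢.s x = 𝒢.r y → 𝒩.p (τ x y) = 𝒢.r x

def IsCentralTwoCochain (ρ : G → G → N) : Prop :=
  ∀ x y, 𝒢.s x = 𝒢.r y → ∀ m, 𝒩.p m = 𝒢.r x → 𝒩.mul (ρ x y) m = 𝒩.mul m (ρ x y)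

variable {𝒢 𝒩}

theorem IsCentralTwoCochain.mk_mem_center {ρ : G → G → N} (hρc : IsCentralTwoCochain 𝒢 𝒩 ρ)
    (hρ : IsTwoCochain 𝒢 𝒩 ρ) {x y : G} (h : 𝒢.s x = 𝒢.r y) {u : U} (hu : 𝒢.r x = u) :
    (⟨ρ x y, (hρ x y h).trans hu⟩ : 𝒩.Fiber u) ∈ Subgroup.center (𝒩.Fiber u) := by
  subst hu
  exact (GrpBundle.mk_mem_center_iff _).mpr (hρc x y h)

theorem PreFS.F1_of_L_eq (P F : PreFS 𝒢 𝒩) (hL : ∀ x n, 𝒩.p n = 𝒢.s x → F.L x n = P.L x n)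
    {x y : G} {n : N} (hxy : 𝒢.s x = 𝒢.r y) (hn : 𝒩.p n = 𝒢.s y) :
    P.L x (P.L y n) = 𝒩.mul (𝒩.mul (F.σ x y) (P.L (𝒢.mul x y) n)) (𝒩.inv (F.σ x y)) := by
  rw [← hL y n hn, ← hL x _ ((F.L_fib y n hn).trans hxy.symm),
    ← hL _ n ((𝒢.s_mul x y hxy).symm ▸ hn)]
  exact F.F1 x y n hxy hn

theorem PreFS.F1_iff_isCentralTwoCochain (P : PreFS 𝒢 𝒩) {ρ τ : G → G → N}
    (hρ : IsTwoCochain 𝒢 𝒩 ρ) (hτ : IsTwoCochain 𝒢 𝒩 τ)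
    (hσ : ∀ x y, 𝒢.s x = 𝒢.r y → P.σ x y = 𝒩.mul (ρ x y) (τ x y)) :
    (∀ x y n, 𝒢.s x = 𝒢.r y → 𝒩.p n = 𝒢.s y →
      P.L x (P.L y n) = 𝒩.mul (𝒩.mul (τ x y) (P.L (𝒢.mul x y) n)) (𝒩.inv (τ x y))) ↔
    IsCentralTwoCochain 𝒢 𝒩 ρ := by
  refine forall₂_congr fun x y => ?_
  rw [forall_comm]
  refine forall_congr' fun hxy => ?_
  have hL : Set.BijOn (P.L (𝒢.mul x y)) {n | 𝒩.p n = 𝒢.s y} {m | 𝒩.p m = 𝒢.r x} := by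
    rw [← 𝒢.s_mul x y hxy, ← 𝒢.r_mul x y hxy]
    exact P.L_bij _
  have hF1 : ∀ n, 𝒩.p n = 𝒢.s y →
      (P.L x (P.L y n) = 𝒩.mul (𝒩.mul (τ x y) (P.L (𝒢.mul x y) n)) (𝒩.inv (τ x y)) ↔
      𝒩.mul (𝒩.mul (𝒩.mul (ρ x y) (τ x y)) (P.L (𝒢.mul x y) n)) (𝒩.inv (𝒩.mul (ρ x y) (τ x y)))
        = 𝒩.mul (𝒩.mul (τ x y) (P.L (𝒢.mul x y) n)) (𝒩.inv (τ x y))) := by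
    intro n hn
    rw [P.F1 x y n hxy hn, hσ x y hxy]
  rw [forall₂_congr hF1]
  exact (hL.surjOn.forall hL.mapsTo).symm.trans
    (GrpBundle.conj_mul_eq_conj_iff (hρ x y hxy) (hτ x y hxy))

theorem PreFS.chi_eq_chi_iff (P : PreFS 𝒢 𝒩) {ρ τ : G → G → N}
    (hρ : IsTwoCochain 𝒢 𝒩 ρ) (hτ : IsTwoCochain 𝒢 𝒩 τ) (hρc : IsCentralTwoCochain 𝒢 𝒩 ρ)
    (hσ : ∀ x y, 𝒢.s x = 𝒢.r y → P.σ x y = 𝒩.mul (ρ x y) (τ x y))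
    {x y z : G} (hxy : 𝒢.s x = 𝒢.r y) (hyz : 𝒢.s y = 𝒢.r z) :
    chi 𝒢 𝒩 P.L P.σ x y z = chi 𝒢 𝒩 P.L ρ x y z ↔
      𝒩.mul (τ x y) (τ (𝒢.mul x y) z) = 𝒩.mul (P.L x (τ y z)) (τ x (𝒢.mul y z)) := by
  have hx_yz : 𝒢.s x = 𝒢.r (𝒢.mul y z) := hxy.trans (𝒢.r_mul y z hyz).symm
  have hxy_z : 𝒢.s (𝒢.mul x y) = 𝒢.r z := (𝒢.s_mul x y hxy).trans hyz
  have hrxy : 𝒢.r (𝒢.mul x y) = 𝒢.r x := 𝒢.r_mul x y hxy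
  rw [chi, hσ y z hyz, hσ x _ hx_yz, hσ _ z hxy_z, hσ x y hxy,
    P.L_mul x _ _ ((hρ y z hyz).trans hxy.symm) ((hτ y z hyz).trans hxy.symm)]
  have key := mul_mul_inv_mul_inv_eq_iff_of_mem_center
    (r₁ := ⟨P.L x (ρ y z), P.L_fib x _ ((hρ y z hyz).trans hxy.symm)⟩)
    (hρc.mk_mem_center hρ hx_yz rfl) (hρc.mk_mem_center hρ hxy_z hrxy)
    (hρc.mk_mem_center hρ hxy rfl)
    ⟨P.L x (τ y z), P.L_fib x _ ((hτ y z hyz).trans hxy.symm)⟩ ⟨τ x (𝒢.mul y z), hτ _ _ hx_yz⟩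
    ⟨τ (𝒢.mul x y) z, (hτ _ _ hxy_z).trans hrxy⟩ ⟨τ x y, hτ x y hxy⟩
  rw [Subtype.ext_iff, Subtype.ext_iff] at key
  exact key

noncomputable def PreFS.toFSOfChiEq (P : PreFS 𝒢 𝒩) {ρ : G → G → N} (hρ : IsTwoCochain 𝒢 𝒩 ρ)
    (hρl : ∀ x, ρ (𝒢.e (𝒢.r x)) x = 𝒩.one (𝒢.r x))
    (hρr : ∀ x, ρ x (𝒢.e (𝒢.s x)) = 𝒩.one (𝒢.r x)) (hρc : IsCentralTwoCochain 𝒢 𝒩 ρ)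
    (hχ : ∀ x y z, 𝒢.s x = 𝒢.r y → 𝒢.s y = 𝒢.r z →
      chi 𝒢 𝒩 P.L P.σ x y z = chi 𝒢 𝒩 P.L ρ x y z) :
    FS 𝒢 𝒩 :=
  let τ : G → G → N := fun x y => 𝒩.mul (𝒩.inv (ρ x y)) (P.σ x y)
  have hτ : IsTwoCochain 𝒢 𝒩 τ := fun x y h =>
    GrpBundle.p_mul_of_eq ((𝒩.p_inv _).trans (hρ x y h)) (P.σ_fib x y h)
  have hσ : ∀ x y, 𝒢.s x = 𝒢.r y → P.σ x y = 𝒩.mul (ρ x y) (τ x y) := fun x y h =>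
    (GrpBundle.mul_inv_cancel_left ((P.σ_fib x y h).trans (hρ x y h).symm)).symm
  { P with
    σ := τ
    σ_fib := hτ
    σ_e_left := fun x => by simp [τ, hρl, P.σ_e_left, 𝒩.inv_mul, 𝒩.p_one]
    σ_e_right := fun x => by simp [τ, hρr, P.σ_e_right, 𝒩.inv_mul, 𝒩.p_one]
    F1 := (P.F1_iff_isCentralTwoCochain hρ hτ hσ).mpr hρc
    F2 := fun x y z hxy hyz => (P.chi_eq_chi_iff hρ hτ hρc hσ hxy hyz).mp (hχ x y z hxy hyz) }

end Cochains

/-- Let `L` be outer, witnessed by a pair `(L,σ)` satisfying the twisted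
action condition (F1).  Then there exists a groupoid extension of `𝒢` by `𝒩` with `𝒢`-kernel
`[L]` — i.e. a full factor system `(L,σ'')` satisfying (F1) and (F2) — if and only if the
characteristic class `χ(L) = [χ_{(L,σ)}] ∈ H³(𝒢,Z(𝒩))_L` is trivial, i.e. `χ_{(L,σ)}` is the
coboundary `d²_L(ρ)` of a normalized central 2-cochain `ρ`. -/
theorem stmt14 {G U N : Type} (𝒢 : Gpd G U) (𝒩 : GrpBundle N U) (P : PreFS 𝒢 𝒩) :
    (∃ F : FS 𝒢 𝒩, ∀ x n, 𝒩.p n = 𝒢.s x → F.L x n = P.L x n) ↔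
    (∃ ρ : G → G → N,
      (∀ x y, 𝒢.s x = 𝒢.r y → 𝒩.p (ρ x y) = 𝒢.r x) ∧
      (∀ x, ρ (𝒢.e (𝒢.r x)) x = 𝒩.one (𝒢.r x)) ∧
      (∀ x, ρ x (𝒢.e (𝒢.s x)) = 𝒩.one (𝒢.r x)) ∧
      (∀ x y, 𝒢.s x = 𝒢.r y → ∀ m, 𝒩.p m = 𝒢.r x →
        𝒩.mul (ρ x y) m = 𝒩.mul m (ρ x y)) ∧
      (∀ x y z, 𝒢.s x = 𝒢.r y → 𝒢.s y = 𝒢.r z →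
        chi 𝒢 𝒩 P.L P.σ x y z =
          𝒩.mul (𝒩.mul (𝒩.mul (P.L x (ρ y z)) (ρ x (𝒢.mul y z)))
            (𝒩.inv (ρ (𝒢.mul x y) z))) (𝒩.inv (ρ x y)))) := by
  constructor
  · rintro ⟨F, hFL⟩
    let ρ : G → G → N := fun x y => 𝒩.mul (P.σ x y) (𝒩.inv (F.σ x y))
    have hρ : IsTwoCochain 𝒢 𝒩 ρ := fun x y h =>
      GrpBundle.p_mul_of_eq (P.σ_fib x y h) ((𝒩.p_inv _).trans (F.σ_fib x y h))
    have hσ : ∀ x y, 𝒢.s x = 𝒢.r y → P.σ x y = 𝒩.mul (ρ x y) (F.σ x y) := fun x y h =>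
      (GrpBundle.inv_mul_cancel_right ((F.σ_fib x y h).trans (P.σ_fib x y h).symm)).symm
    have hρc := (P.F1_iff_isCentralTwoCochain hρ F.σ_fib hσ).mp
      fun _ _ _ hxy hn => P.F1_of_L_eq F.toPreFS hFL hxy hn
    refine ⟨ρ, hρ, fun x => ?_, fun x => ?_, hρc, fun x y z hxy hyz =>
      (P.chi_eq_chi_iff hρ F.σ_fib hρc hσ hxy hyz).mpr ?_⟩
    · simp [ρ, P.σ_e_left, F.σ_e_left, 𝒩.mul_inv, 𝒩.p_one]
    · simp [ρ, P.σ_e_right, F.σ_e_right, 𝒩.mul_inv, 𝒩.p_one]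
    · rw [← hFL x _ ((F.σ_fib y z hyz).trans hxy.symm)]
      exact F.F2 x y z hxy hyz
  · rintro ⟨ρ, hρ, hρl, hρr, hρc, hχ⟩
    exact ⟨P.toFSOfChiEq hρ hρl hρr hρc hχ, fun _ _ _ => rfl⟩
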